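/- For every real number z with 0 ≤ z < 1/2, ∑_{n=0}^∞ 4^n z^{n+1} / ((2n+1)·binom(2n,n)) = ∑_{n=0}^∞ ((−1)^n/(2n+1)) · (z/(1−z))^{n+1}. -/

import Mathlib

/-!
Both sides are integrals over `[0, 1]` of geometric series summed term by term. On the left,
`∫₀¹ (t(1-t))ⁿ dt = n!²/(2n+1)! = 1/((2n+1)·binom(2n,n))` (Euler's Beta integral), so the sum is
`∫₀¹ z / (1 - 4z t(1-t)) dt`; on the right `∫₀¹ s²ⁿ ds = 1/(2n+1)`, so with `w = z/(1-z)` the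
sum is `∫₀¹ w / (1 + w s²) ds`. The substitution `s = 2t - 1` turns `1 - 4z t(1-t)` into
`(1 - z)(1 + w s²)`, and the integrand is even in `s`.
-/

open Nat

theorem hasSum_intervalIntegral_pow {f : ℝ → ℝ} {a b q : ℝ} (hf : Continuous f) (hq : q < 1)
    (hfq : ∀ t ∈ Set.uIcc a b, |f t| ≤ q) :
    HasSum (fun n : ℕ => ∫ t in a..b, f t ^ n) (∫ t in a..b, (1 - f t)⁻¹) := by
  have hq0 : 0 ≤ q := (abs_nonneg _).trans (hfq a Set.left_mem_uIcc)
  refine intervalIntegral.hasSum_integral_of_dominated_convergence (fun n _ => q ^ n)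
    (fun n => (hf.pow n).aestronglyMeasurable) (fun n => .of_forall fun t ht => ?_)
    (.of_forall fun _ _ => summable_geometric_of_lt_one hq0 hq) intervalIntegrable_const
    (.of_forall fun t ht => hasSum_geometric_of_abs_lt_one ?_)
  · rw [norm_pow, Real.norm_eq_abs]
    exact pow_le_pow_left₀ (abs_nonneg _) (hfq t (Set.uIoc_subset_uIcc ht)) n
  · exact (hfq t (Set.uIoc_subset_uIcc ht)).trans_lt hq

theorem integral_mul_one_sub_pow (n : ℕ) :
    ∫ t in (0:ℝ)..1, (t * (1 - t)) ^ n = 1 / ((2 * n + 1) * (2 * n).choose n) := by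
  have hre : 0 < ((n : ℂ) + 1).re := by
    simp only [Complex.add_re, Complex.natCast_re, Complex.one_re]
    positivity
  have hB := Complex.Gamma_mul_Gamma_eq_betaIntegral hre hre
  have hcast : ∀ t : ℝ, (t : ℂ) ^ n * (1 - (t : ℂ)) ^ n = (((t * (1 - t)) ^ n : ℝ) : ℂ) := by
    intro t; push_cast; rw [mul_pow]
  rw [show (n : ℂ) + 1 + (n + 1) = ((2 * n + 1 : ℕ) : ℂ) + 1 by push_cast; ring,
    Complex.Gamma_nat_eq_factorial, Complex.Gamma_nat_eq_factorial] at hB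
  simp only [Complex.betaIntegral, add_sub_cancel_right, Complex.cpow_natCast, hcast,
    intervalIntegral.integral_ofReal] at hB
  have hC : ((2 * n).choose n : ℝ) * n ! * n ! = (2 * n)! := by
    have := Nat.choose_mul_factorial_mul_factorial (n := 2 * n) (k := n) (by omega)
    rw [show 2 * n - n = n by omega] at this
    exact_mod_cast this
  have hB' : (n ! : ℝ) * n ! = (2 * n + 1)! * ∫ t in (0:ℝ)..1, (t * (1 - t)) ^ n := by
    exact_mod_cast hB
  have hfact : ((2 * n + 1)! : ℝ) = (2 * n + 1) * (2 * n)! := by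
    push_cast [Nat.factorial_succ]; ring
  rw [hfact, ← hC] at hB'
  have hf : (n ! : ℝ) * n ! ≠ 0 := by positivity
  have hC0 : ((2 * n).choose n : ℝ) ≠ 0 := by exact_mod_cast (Nat.choose_pos (by omega)).ne'
  rw [eq_div_iff (by positivity)]
  refine mul_left_cancel₀ hf ?_
  linear_combination -hB'

theorem hasSum_four_pow_mul_pow_succ_div {z : ℝ} (hz : |z| < 1) :
    HasSum (fun n : ℕ => 4 ^ n * z ^ (n + 1) / ((2 * (n : ℝ) + 1) * ((2 * n).choose n : ℝ)))
      (z * ∫ t in (0:ℝ)..1, (1 - 4 * z * (t * (1 - t)))⁻¹) := by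
  have hbound : ∀ t ∈ Set.uIcc (0:ℝ) 1, |4 * z * (t * (1 - t))| ≤ |z| := by
    intro t ht
    rw [Set.uIcc_of_le zero_le_one] at ht
    have ht0 : 0 ≤ t * (1 - t) := mul_nonneg ht.1 (by linarith [ht.2])
    rw [mul_comm 4 z, mul_assoc, abs_mul, abs_of_nonneg (by positivity : 0 ≤ 4 * (t * (1 - t)))]
    exact mul_le_of_le_one_right (abs_nonneg z) (by nlinarith [sq_nonneg (2 * t - 1)])
  refine ((hasSum_intervalIntegral_pow (by fun_prop) hz hbound).mul_left z).congr_fun fun n => ?_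
  simp_rw [mul_pow (4 * z)]
  rw [intervalIntegral.integral_const_mul, integral_mul_one_sub_pow]
  ring

theorem hasSum_neg_one_pow_div_mul_pow_succ {w : ℝ} (hw : |w| < 1) :
    HasSum (fun n : ℕ => (-1) ^ n / (2 * (n : ℝ) + 1) * w ^ (n + 1))
      (w * ∫ s in (0:ℝ)..1, (1 + w * s ^ 2)⁻¹) := by
  have hbound : ∀ s ∈ Set.uIcc (0:ℝ) 1, |-(w * s ^ 2)| ≤ |w| := by
    intro s hs
    rw [Set.uIcc_of_le zero_le_one] at hs
    rw [abs_neg, abs_mul, abs_of_nonneg (sq_nonneg s)]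
    exact mul_le_of_le_one_right (abs_nonneg w) (pow_le_one₀ hs.1 hs.2)
  have h := (hasSum_intervalIntegral_pow (by fun_prop) hw hbound).mul_left w
  simp only [sub_neg_eq_add] at h
  refine h.congr_fun fun n => ?_
  simp_rw [neg_mul_eq_neg_mul, mul_pow, ← pow_mul]
  rw [intervalIntegral.integral_const_mul, integral_pow, neg_pow, one_pow, zero_pow (by omega),
    sub_zero]
  push_cast
  ring

theorem integral_comp_two_mul_sub_one_of_even {f : ℝ → ℝ} (hf : Continuous f)
    (heven : ∀ x, f (-x) = f x) :
    ∫ t in (0:ℝ)..1, f (2 * t - 1) = ∫ s in (0:ℝ)..1, f s := by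
  have hneg : ∫ s in (-1:ℝ)..0, f s = ∫ s in (0:ℝ)..1, f s := by
    simpa [heven] using (intervalIntegral.integral_comp_neg (a := 0) (b := 1) f).symm
  rw [intervalIntegral.integral_comp_mul_sub f two_ne_zero,
    ← intervalIntegral.integral_add_adjacent_intervals (b := 0) (hf.intervalIntegrable _ _)
      (hf.intervalIntegrable _ _)]
  norm_num [hneg]
  ring

theorem integral_inv_one_sub_four_mul_mul_one_sub {z : ℝ} (hz0 : 0 ≤ z) (hz1 : z < 1) :
    ∫ t in (0:ℝ)..1, (1 - 4 * z * (t * (1 - t)))⁻¹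
      = (1 - z)⁻¹ * ∫ s in (0:ℝ)..1, (1 + z / (1 - z) * s ^ 2)⁻¹ := by
  have hpos : ∀ s : ℝ, 0 < 1 - z * (1 - s ^ 2) := fun s => by nlinarith [sq_nonneg s]
  have hsq : ∀ t : ℝ, 4 * (t * (1 - t)) = 1 - (2 * t - 1) ^ 2 := fun t => by ring
  have hz : 1 - z ≠ 0 := by linarith
  have hfactor : ∀ s : ℝ, 1 - z * (1 - s ^ 2) = (1 - z) * (1 + z / (1 - z) * s ^ 2) := by
    intro s; field_simp; ring
  have hcont : Continuous fun s : ℝ => (1 - z * (1 - s ^ 2))⁻¹ :=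
    (by fun_prop : Continuous fun s : ℝ => 1 - z * (1 - s ^ 2)).inv₀ fun s => (hpos s).ne'
  simp_rw [mul_comm 4 z, mul_assoc z 4, hsq]
  rw [integral_comp_two_mul_sub_one_of_even hcont (fun x => by simp only [neg_sq])]
  simp_rw [hfactor, mul_inv]
  exact intervalIntegral.integral_const_mul _ _

/-- For `0 ≤ z < 1/2`,
`∑_{n=0}^∞ 4^n z^(n+1)/((2n+1)·binom(2n,n))
  = ∑_{n=0}^∞ ((-1)^n/(2n+1))·(z/(1-z))^(n+1)`. -/
theorem sprugnoli_alternating_form (z : ℝ) (hz0 : 0 ≤ z) (hz1 : z < 1 / 2) :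
    ∑' n : ℕ, 4 ^ n * z ^ (n + 1) / ((2 * (n : ℝ) + 1) * ((2 * n).choose n : ℝ))
      = ∑' n : ℕ, (-1) ^ n / (2 * (n : ℝ) + 1) * (z / (1 - z)) ^ (n + 1) := by
  have hz1' : z < 1 := by linarith
  have hz : |z| < 1 := abs_lt.mpr ⟨by linarith, hz1'⟩
  have hw : |z / (1 - z)| < 1 := by
    rw [abs_of_nonneg (div_nonneg hz0 (by linarith)), div_lt_one (by linarith)]
    linarith
  rw [(hasSum_four_pow_mul_pow_succ_div hz).tsum_eq,
    (hasSum_neg_one_pow_div_mul_pow_succ hw).tsum_eq,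
    integral_inv_one_sub_four_mul_mul_one_sub hz0 hz1', ← mul_assoc, div_eq_mul_inv]
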